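/- arXiv:0911.4732 — 2 statements merged into one kernel-verified Lean document; each statement's English description precedes it below -/
import Mathlib

section
/- Let G = (U ∪ W, E) be a connected bipartite graph in which every vertex of W has degree at most 2, and let B be its |U|×|W| bipartite adjacency matrix over F_2. Then rk_2(B) = |U| if some vertex of W has degree 1, and rk_2(B) = |U| - 1 if every vertex of W has degree exactly 2. -/
open Matrix

/-- The bipartite adjacency matrix over `F_2` of the edge set `S ⊆ U × W`. -/
def bipMat {U W : Type*} [DecidableEq U] [DecidableEq W] (S : Finset (U × W)) :
    Matrix U W (ZMod 2) :=
  Matrix.of fun u w => if (u, w) ∈ S then 1 else 0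

/-- The simple graph on `U ⊕ W` determined by the bipartite edge set `E ⊆ U × W`. -/
def bipGraph {U W : Type*} (E : Finset (U × W)) : SimpleGraph (U ⊕ W) :=
  SimpleGraph.fromRel fun x y => ∃ p ∈ E, x = Sum.inl p.1 ∧ y = Sum.inr p.2

/-!
A vector `x ∈ F_2^U` lies in the left kernel of `B` iff `∑_{u ~ w} x u = 0` for every `w ∈ W`.
Since each `w` has at most two neighbours, this forces `x` to take the same value at the
neighbours of `w`, so by connectivity `x` is constant. A vertex `w` of degree one forces that
constant to vanish, so the left kernel is trivial; if every `w` has degree two, the all-ones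
vector lies in it, so the left kernel is the line spanned by it. Rank–nullity concludes.
-/

theorem SimpleGraph.Reachable.eq_of_forall_adj {V α : Type*} {G : SimpleGraph V} {F : V → α}
    (hF : ∀ a b, G.Adj a b → F a = F b) {a b : V} (h : G.Reachable a b) : F a = F b := by
  obtain ⟨p⟩ := h
  induction p with
  | nil => rfl
  | cons hadj _ ih => exact (hF _ _ hadj).trans ih

theorem Matrix.rank_add_finrank_ker_mulVecLin_transpose {K m n : Type*} [Field K] [Fintype m]
    [Fintype n] (A : Matrix m n K) :
    A.rank + Module.finrank K (LinearMap.ker Aᵀ.mulVecLin) = Fintype.card m := by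
  rw [← rank_transpose, Matrix.rank, LinearMap.finrank_range_add_finrank_ker,
    Module.finrank_fintype_fun_eq_card]

theorem CharTwo.eq_of_sum_eq_zero_of_card_le_two {R ι : Type*} [Ring R] [CharP R 2]
    {s : Finset ι} (hs : s.card ≤ 2) {f : ι → R} (hf : ∑ i ∈ s, f i = 0) {i j : ι}
    (hi : i ∈ s) (hj : j ∈ s) : f i = f j := by
  classical
  by_cases hij : i = j
  · rw [hij]
  have hs : s = {i, j} :=
    (Finset.eq_of_subset_of_card_le (Finset.insert_subset hi (Finset.singleton_subset_iff.2 hj))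
      (by rwa [Finset.card_pair hij])).symm
  rw [hs, Finset.sum_pair hij] at hf
  exact CharTwo.add_eq_zero.mp hf

section bipartite

variable {U W : Type*} [Fintype U] [DecidableEq U] [DecidableEq W] (E : Finset (U × W))

def bipNeighbors (w : W) : Finset U := Finset.univ.filter fun u => (u, w) ∈ E

variable {E}

theorem mem_bipNeighbors {w : W} {u : U} : u ∈ bipNeighbors E w ↔ (u, w) ∈ E := by
  simp [bipNeighbors]

theorem card_bipNeighbors (w : W) :
    (bipNeighbors E w).card = (E.filter fun p => p.2 = w).card := by
  refine Finset.card_bij (fun u _ => (u, w)) (fun u hu => ?_) (fun _ _ _ _ h => ?_) ?_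
  · simpa using mem_bipNeighbors.1 hu
  · exact (Prod.mk.inj h).1
  · rintro ⟨u, w'⟩ hp
    obtain ⟨hE, rfl : w' = w⟩ := Finset.mem_filter.1 hp
    exact ⟨u, mem_bipNeighbors.2 hE, rfl⟩

theorem transpose_bipMat_mulVec_apply (x : U → ZMod 2) (w : W) :
    ((bipMat E)ᵀ *ᵥ x) w = ∑ u ∈ bipNeighbors E w, x u := by
  simp only [mulVec, dotProduct, transpose_apply, bipMat, of_apply, ite_mul, one_mul,
    zero_mul, bipNeighbors, Finset.sum_filter]

theorem eq_of_transpose_bipMat_mulVec_eq_zero (hconn : (bipGraph E).Connected)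
    (hdeg : ∀ w : W, (E.filter fun p => p.2 = w).card ≤ 2) {x : U → ZMod 2}
    (hx : (bipMat E)ᵀ *ᵥ x = 0) (u u' : U) : x u = x u' := by
  have hsum (w : W) : ∑ u ∈ bipNeighbors E w, x u = 0 := by
    rw [← transpose_bipMat_mulVec_apply, hx, Pi.zero_apply]
  have hcol {u u' : U} {w : W} (hu : (u, w) ∈ E) (hu' : (u', w) ∈ E) : x u = x u' :=
    CharTwo.eq_of_sum_eq_zero_of_card_le_two ((card_bipNeighbors w).trans_le (hdeg w))
      (hsum w) (mem_bipNeighbors.2 hu) (mem_bipNeighbors.2 hu')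
  -- extend `x` to `W` by its value at an arbitrary neighbour
  let F : U ⊕ W → ZMod 2 :=
    Sum.elim x fun w => if h : ∃ u, (u, w) ∈ E then x h.choose else 0
  have hedge {u : U} {w : W} (huw : (u, w) ∈ E) : F (.inl u) = F (.inr w) := by
    have hw : ∃ u, (u, w) ∈ E := ⟨u, huw⟩
    simpa only [F, Sum.elim_inl, Sum.elim_inr, dif_pos hw] using hcol huw hw.choose_spec
  have hadj (a b : U ⊕ W) (hab : (bipGraph E).Adj a b) : F a = F b := by
    obtain ⟨-, ⟨p, hp, rfl, rfl⟩ | ⟨p, hp, rfl, rfl⟩⟩ := hab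
    · exact hedge hp
    · exact (hedge hp).symm
  exact (hconn.preconnected (.inl u) (.inl u')).eq_of_forall_adj hadj

theorem ker_transpose_bipMat_eq_bot (hconn : (bipGraph E).Connected)
    (hdeg : ∀ w : W, (E.filter fun p => p.2 = w).card ≤ 2) {w : W}
    (hw : (E.filter fun p => p.2 = w).card = 1) :
    LinearMap.ker (bipMat E)ᵀ.mulVecLin = ⊥ := by
  obtain ⟨u₀, hu₀⟩ := Finset.card_eq_one.1 ((card_bipNeighbors w).trans hw)
  refine (LinearMap.ker_eq_bot').2 fun x hx => funext fun u => ?_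
  have hx₀ : x u₀ = 0 := by
    rw [← Finset.sum_singleton x u₀, ← hu₀, ← transpose_bipMat_mulVec_apply]
    exact congrFun hx w
  rw [eq_of_transpose_bipMat_mulVec_eq_zero hconn hdeg hx u u₀, hx₀, Pi.zero_apply]

theorem ker_transpose_bipMat_eq_span_one (hconn : (bipGraph E).Connected)
    (hdeg : ∀ w : W, (E.filter fun p => p.2 = w).card = 2) :
    LinearMap.ker (bipMat E)ᵀ.mulVecLin = Submodule.span (ZMod 2) {1} := by
  refine le_antisymm (fun x hx => ?_) ((Submodule.span_singleton_le_iff_mem _ _).2 ?_)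
  · obtain _ | ⟨⟨u₀⟩⟩ := isEmpty_or_nonempty U
    · exact (Subsingleton.elim x 0) ▸ Submodule.zero_mem _
    refine Submodule.mem_span_singleton.2 ⟨x u₀, funext fun u => ?_⟩
    have hconst := eq_of_transpose_bipMat_mulVec_eq_zero hconn (fun w => (hdeg w).le) hx u u₀
    simp [hconst]
  · refine funext fun w => ?_
    rw [Matrix.mulVecLin_apply, transpose_bipMat_mulVec_apply, Pi.zero_apply]
    simp only [Pi.one_apply, Finset.sum_const, card_bipNeighbors, hdeg w]
    exact CharTwo.two_nsmul 1

end bipartite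

theorem rank_bipMat_connected_degree_le_two_general {U W : Type*} [Fintype U] [Fintype W]
    [DecidableEq U] [DecidableEq W] (E : Finset (U × W))
    (hconn : (bipGraph E).Connected)
    (hdeg : ∀ w : W, (E.filter fun p => p.2 = w).card ≤ 2) :
    ((∃ w : W, (E.filter fun p => p.2 = w).card = 1) →
        (bipMat E).rank = Fintype.card U)
    ∧ ((∀ w : W, (E.filter fun p => p.2 = w).card = 2) →
        (bipMat E).rank = Fintype.card U - 1) := by
  have hrk := (bipMat E).rank_add_finrank_ker_mulVecLin_transpose
  refine ⟨fun ⟨w, hw⟩ => ?_, fun h2 => ?_⟩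
  · rw [ker_transpose_bipMat_eq_bot hconn hdeg hw, finrank_bot] at hrk
    omega
  · obtain _ | _ := isEmpty_or_nonempty U
    · have := (bipMat E).rank_le_card_height
      rw [Fintype.card_eq_zero] at this ⊢
      omega
    rw [ker_transpose_bipMat_eq_span_one hconn h2, finrank_span_singleton one_ne_zero] at hrk
    omega

/-- Let `G = (U ∪ W, E)` be a connected bipartite graph (with at least one edge) in which
every vertex of `W` has degree at most `2`, and let `B` be its bipartite adjacency matrix
over `F_2`.  Then `rk_2(B) = |U|` if some vertex of `W` has degree `1`, and
`rk_2(B) = |U| - 1` if every vertex of `W` has degree exactly `2`. -/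
theorem rank_bipMat_connected_degree_le_two {U W : Type*} [Fintype U] [Fintype W]
    [DecidableEq U] [DecidableEq W] (E : Finset (U × W)) (hne : E.Nonempty)
    (hconn : (bipGraph E).Connected)
    (hdeg : ∀ w : W, (E.filter fun p => p.2 = w).card ≤ 2) :
    ((∃ w : W, (E.filter fun p => p.2 = w).card = 1) →
        (bipMat E).rank = Fintype.card U)
    ∧ ((∀ w : W, (E.filter fun p => p.2 = w).card = 2) →
        (bipMat E).rank = Fintype.card U - 1) :=
  rank_bipMat_connected_degree_le_two_general E hconn hdeg
end

section
/- Let G = (U ∪ W, E) be a bipartite graph with t isolated vertices. Then Σ_{S ⊆ E} (1/2)^{rk_2(S)} (−1)^{|S|} = 2^{|E| − |U| − |W| + t}, i.e., R'_2(G; 1/2, −1) = 2^{|E|−|V|+t}. -/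
/-!
Over `𝔽₂`, `2^{-rk M}` is the normalized character sum `2^{-|U|-|W|} ∑_{x,y} (-1)^{x ⬝ M y}`:
the sum over `x` vanishes unless `M y = 0`. For the adjacency matrix of `S` the character
factors as `∏_{(u,w) ∈ S} (-1)^{x_u y_w}`, so the signed sum over `S ⊆ E` becomes
`∏_{(u,w) ∈ E} (1 - (-1)^{x_u y_w})`. This is `2^{|E|}` when `x` and `y` equal `1` on every
non-isolated vertex and `0` otherwise, and there are `2^t` such labellings.
-/

open Finset Matrix

namespace AddChar

lemma map_sum_eq_prod {A M ι : Type*} [AddCommMonoid A] [CommMonoid M] (ψ : AddChar A M)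
    (s : Finset ι) (f : ι → A) : ψ (∑ i ∈ s, f i) = ∏ i ∈ s, ψ (f i) :=
  map_prod ψ.toMonoidHom (fun i => Multiplicative.ofAdd (f i)) s

end AddChar

section CharacterSums

variable {K R : Type*} [Field K] [Fintype K] [DecidableEq K] [CommRing R] [IsDomain R]
  {ψ : AddChar K R} {m n : Type*} [Fintype m] [Fintype n]

theorem sum_addChar_dotProduct [DecidableEq m] (hψ : ψ.IsPrimitive) (v : m → K) :
    ∑ x : m → K, ψ (x ⬝ᵥ v) = if v = 0 then (Fintype.card K : R) ^ Fintype.card m else 0 := by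
  simp only [dotProduct, ψ.map_sum_eq_prod]
  rw [← Fintype.prod_sum (fun a b => ψ (b * v a))]
  simp only [AddChar.sum_mulShift _ hψ, Nat.cast_ite, Nat.cast_zero, prod_ite_zero, prod_const,
    card_univ, funext_iff, mem_univ, true_imp_iff, Pi.zero_apply]

theorem card_ker_mulVec [DecidableEq n] (M : Matrix m n K) :
    #{y | M *ᵥ y = 0} = Fintype.card K ^ (Fintype.card n - M.rank) := by
  have hrank := LinearMap.finrank_range_add_finrank_ker M.mulVecLin
  rw [Module.finrank_fintype_fun_eq_card, ← Matrix.rank] at hrank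
  have := Fintype.ofFinite (LinearMap.ker M.mulVecLin)
  rw [← Fintype.card_subtype, ← hrank, Nat.add_sub_cancel_left, ← Module.card_eq_pow_finrank]
  exact Fintype.card_congr (Equiv.subtypeEquivRight fun _ => Iff.rfl)

theorem sum_sum_addChar_dotProduct_mulVec_mul_pow_rank [DecidableEq m] [DecidableEq n]
    (hψ : ψ.IsPrimitive) (M : Matrix m n K) :
    (∑ x : m → K, ∑ y : n → K, ψ (x ⬝ᵥ M *ᵥ y)) * (Fintype.card K : R) ^ M.rank
      = (Fintype.card K : R) ^ (Fintype.card m + Fintype.card n) := by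
  rw [sum_comm]
  simp only [sum_addChar_dotProduct hψ, sum_ite, sum_const_zero, add_zero, sum_const,
    nsmul_eq_mul]
  rw [card_ker_mulVec, Nat.cast_pow, mul_assoc, ← pow_add, ← pow_add]
  have := M.rank_le_card_width
  congr 1
  omega

end CharacterSums

theorem card_filter_forall_not_imp_eq {α β : Type*} [Fintype α] [DecidableEq α] [Fintype β]
    [DecidableEq β] (p : α → Prop) [DecidablePred p] (b : β) :
    #{z : α → β | ∀ a, ¬ p a → z a = b} = Fintype.card β ^ #{a | p a} := by
  have : ({z : α → β | ∀ a, ¬ p a → z a = b} : Finset _)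
      = Fintype.piFinset fun a => if p a then univ else {b} := by
    ext z
    simp only [mem_filter, mem_univ, true_and, Fintype.mem_piFinset]
    refine forall_congr' fun a => ?_
    split_ifs with h <;> simp [h]
  rw [this, Fintype.card_piFinset]
  simp only [apply_ite Finset.card, card_univ, card_singleton, prod_ite, prod_const_one,
    mul_one, prod_const]

def signChar : AddChar (ZMod 2) ℝ where
  toFun a := if a = 0 then 1 else -1
  map_zero_eq_one' := if_pos rfl
  map_add_eq_mul' a b := by
    obtain rfl | rfl : a = 0 ∨ a = 1 := by revert a; decide
    · simp
    obtain rfl | rfl : b = 0 ∨ b = 1 := by revert b; decide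
    · simp
    simp only [show (1 + 1 : ZMod 2) = 0 from rfl, one_ne_zero, if_true, if_false]
    norm_num

theorem signChar_apply (a : ZMod 2) : signChar a = if a = 0 then 1 else -1 := rfl

theorem signChar_isPrimitive : signChar.IsPrimitive :=
  AddChar.zmod_char_primitive_of_eq_one_only_at_zero 2 _ fun a h => by
    by_contra ha
    rw [signChar_apply, if_neg ha] at h
    norm_num at h

theorem one_sub_signChar (a : ZMod 2) : 1 - signChar a = if a ≠ 0 then 2 else 0 := by
  by_cases ha : a = 0
  · simp [ha]
  · rw [signChar_apply, if_neg ha, if_pos ha]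
    norm_num

theorem dotProduct_bipMat_mulVec {U W : Type*} [Fintype U] [Fintype W] [DecidableEq U]
    [DecidableEq W] (S : Finset (U × W)) (x : U → ZMod 2) (y : W → ZMod 2) :
    x ⬝ᵥ bipMat S *ᵥ y = ∑ p ∈ S, x p.1 * y p.2 := by
  simp only [dotProduct, mulVec, bipMat, of_apply, mul_sum, mul_ite, one_mul, mul_zero,
    ite_mul, zero_mul]
  rw [← sum_product', univ_product_univ, sum_ite_mem, univ_inter]

section BipartiteGraph

variable {U W : Type*} [Fintype U] [Fintype W] [DecidableEq U] [DecidableEq W]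

theorem card_filter_forall_mem_ne_zero (E : Finset (U × W)) :
    #{q : (U → ZMod 2) × (W → ZMod 2) | ∀ p ∈ E, q.1 p.1 ≠ 0 ∧ q.2 p.2 ≠ 0}
      = 2 ^ Nat.card {v : U ⊕ W // ∀ p ∈ E, Sum.inl p.1 ≠ v ∧ Sum.inr p.2 ≠ v} := by
  calc _ = #{z : U ⊕ W → ZMod 2 |
          ∀ v, ¬ (∀ p ∈ E, Sum.inl p.1 ≠ v ∧ Sum.inr p.2 ≠ v) → z v = 1} := by
        refine (card_equiv (Equiv.sumArrowEquivProdArrow U W (ZMod 2)) fun z => ?_).symm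
        have h01 : ∀ a : ZMod 2, a ≠ 0 ↔ a = 1 := by decide
        simp only [mem_filter, mem_univ, true_and, h01, not_forall, not_and_or, not_not,
          Equiv.sumArrowEquivProdArrow_apply_fst, Equiv.sumArrowEquivProdArrow_apply_snd]
        constructor
        · exact fun h p hp => ⟨h _ ⟨p, hp, .inl rfl⟩, h _ ⟨p, hp, .inr rfl⟩⟩
        · rintro h v ⟨p, hp, rfl | rfl⟩
          exacts [(h p hp).1, (h p hp).2]
    _ = _ := by
      rw [card_filter_forall_not_imp_eq, ZMod.card, Nat.card_eq_fintype_card,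
        Fintype.card_subtype]

theorem sum_powerset_neg_one_pow_mul_sum_signChar (E : Finset (U × W)) :
    ∑ S ∈ E.powerset, (-1 : ℝ) ^ #S *
        ∑ x : U → ZMod 2, ∑ y : W → ZMod 2, signChar (x ⬝ᵥ bipMat S *ᵥ y)
      = 2 ^ (#E + Nat.card {v : U ⊕ W // ∀ p ∈ E, Sum.inl p.1 ≠ v ∧ Sum.inr p.2 ≠ v}) := by
  calc _ = ∑ x : U → ZMod 2, ∑ y : W → ZMod 2,
          ∑ S ∈ E.powerset, ∏ p ∈ S, -signChar (x p.1 * y p.2) := by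
        simp only [mul_sum, dotProduct_bipMat_mulVec, signChar.map_sum_eq_prod, prod_neg]
        rw [sum_comm]
        exact sum_congr rfl fun x _ => sum_comm
    _ = ∑ x : U → ZMod 2, ∑ y : W → ZMod 2, ∏ p ∈ E, (1 - signChar (x p.1 * y p.2)) := by
        simp only [sub_eq_add_neg, prod_one_add]
    _ = ∑ q : (U → ZMod 2) × (W → ZMod 2),
          if ∀ p ∈ E, q.1 p.1 ≠ 0 ∧ q.2 p.2 ≠ 0 then (2 : ℝ) ^ #E else 0 := by
        simp only [one_sub_signChar, prod_ite_zero, prod_const, mul_ne_zero_iff]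
        exact (Fintype.sum_prod_type' _).symm
    _ = _ := by
        rw [sum_ite, sum_const_zero, add_zero, sum_const, card_filter_forall_mem_ne_zero,
          nsmul_eq_mul, pow_add]
        push_cast
        ring

end BipartiteGraph

/-- For a bipartite graph `G = (U ∪ W, E)` with `t` isolated vertices,
`Σ_{S ⊆ E} (1/2)^{rk_2(S)} (−1)^{|S|} = 2^{|E| − |U| − |W| + t}`, i.e.
`R'₂(G; 1/2, −1) = 2^{|E| − |V| + t}`. -/
theorem rank_sum_at_half_neg_one {U W : Type*} [Fintype U] [Fintype W]
    [DecidableEq U] [DecidableEq W] (E : Finset (U × W)) :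
    ∑ S ∈ E.powerset, (1 / 2 : ℝ) ^ (bipMat S).rank * (-1 : ℝ) ^ S.card
      = (2 : ℝ) ^ ((E.card : ℤ) - Fintype.card U - Fintype.card W +
          Nat.card {x : U ⊕ W // ∀ p ∈ E, Sum.inl p.1 ≠ x ∧ Sum.inr p.2 ≠ x}) := by
  have hrank (S : Finset (U × W)) : (1 / 2 : ℝ) ^ (bipMat S).rank * (-1 : ℝ) ^ S.card
      = (-1 : ℝ) ^ #S * (∑ x : U → ZMod 2, ∑ y : W → ZMod 2, signChar (x ⬝ᵥ bipMat S *ᵥ y))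
        / 2 ^ (Fintype.card U + Fintype.card W) := by
    have := sum_sum_addChar_dotProduct_mulVec_mul_pow_rank signChar_isPrimitive (bipMat S)
    rw [ZMod.card, Nat.cast_ofNat] at this
    rw [eq_div_iff (by positivity), ← this, one_div, inv_pow]
    field_simp
  rw [sum_congr rfl fun S _ => hrank S, ← sum_div, sum_powerset_neg_one_pow_mul_sum_signChar,
    ← zpow_natCast, ← zpow_natCast, ← zpow_sub₀ two_ne_zero]
  push_cast
  ring_nf
end
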